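/- In the avg-AL reduction instance built from a simple graph H = (V, E) and an integer k ≥ 3 with |V| + |E| > k and k+1 divisible by 3, under avg-AL utilities with fixed weight w ≥ n^4, the following holds: if a coalition C blocks the coalition structure Γ, then every player of C is a vertex player v', an edge player e', an incidence player b_{v,e}, or the mid player of a vertex gadget P_v; in particular, C contains no base-clique players of any gadget and no mid players of edge or incidence gadgets. -/

import Mathlib

open Finset
open scoped Classical

section AHGDefs

variable {N : Type*} [Fintype N] [DecidableEq N]

/-- The set of friends of player `i` inside coalition `C`. -/
noncomputable def friendsIn (G : SimpleGraph N) (C : Finset N) (i : N) : Finset N :=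
  C.filter fun j => G.Adj i j

/-- The friend-oriented valuation of coalition `C` by player `i`:
`val_i(C) = n·|F_i ∩ C| − |E_i ∩ C|`. -/
noncomputable def fval (G : SimpleGraph N) (C : Finset N) (i : N) : ℤ :=
  (Fintype.card N : ℤ) * ((friendsIn G C i).card : ℤ)
    - ((C.filter fun j => ¬ G.Adj i j ∧ j ≠ i).card : ℤ)

/-- Average-based equal-treatment utility. -/
noncomputable def utilAvgEQ (G : SimpleGraph N) (C : Finset N) (i : N) : ℚ :=
  (∑ c ∈ insert i (friendsIn G C i), (fval G C c : ℚ)) /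
    ((insert i (friendsIn G C i)).card : ℚ)

/-- Average-based altruistic-treatment utility with weight `w`. -/
noncomputable def utilAvgAL (G : SimpleGraph N) (w : ℚ) (C : Finset N) (i : N) : ℚ :=
  (fval G C i : ℚ) +
    w * (if (friendsIn G C i).Nonempty then
          (∑ c ∈ friendsIn G C i, (fval G C c : ℚ)) / ((friendsIn G C i).card : ℚ)
         else 0)

/-- Min-based equal-treatment utility. -/
noncomputable def utilMinEQ (G : SimpleGraph N) (C : Finset N) (i : N) : ℤ :=
  (insert i (friendsIn G C i)).inf' (insert_nonempty _ _) (fval G C)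

/-- Min-based altruistic-treatment utility with weight `w`. -/
noncomputable def utilMinAL (G : SimpleGraph N) (w : ℤ) (C : Finset N) (i : N) : ℤ :=
  fval G C i +
    w * (if h : (friendsIn G C i).Nonempty then (friendsIn G C i).inf' h (fval G C) else 0)

/-- A coalition structure (partition of the players), given as the map sending
each player to its coalition. -/
structure CoalitionStructure (N : Type*) [Fintype N] [DecidableEq N] where
  part : N → Finset N
  mem_part : ∀ i, i ∈ part i
  part_eq : ∀ i j, j ∈ part i → part j = part i

/-- A (nonempty) coalition `C` blocks the coalition structure `Γ`. -/
def Blocks {α : Type*} [LT α] (util : Finset N → N → α) (Γ : CoalitionStructure N)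
    (C : Finset N) : Prop :=
  C.Nonempty ∧ ∀ i ∈ C, util (Γ.part i) i < util C i

/-- Core stability: no nonempty coalition blocks `Γ`. -/
def CoreStable {α : Type*} [LT α] (util : Finset N → N → α)
    (Γ : CoalitionStructure N) : Prop :=
  ¬ ∃ C : Finset N, Blocks util Γ C

/-- The base clique of a pinched `(d,k')`-dome gadget on `P` with top player `top`
and (unique) mid player `mid`. -/
noncomputable def pdomeBase (P : Finset N) (top mid : N) : Finset N :=
  P \ {top, mid}

/-- `P` carries a pinched `(d,k')`-dome gadget of the graph `G`, with top player `top`,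
the unique mid player `mid` (obtained by identifying the `d` mid players) and fringe
players `fringe i`. -/
structure IsPinchedDomeGadget (G : SimpleGraph N) (d k' : ℕ) (P : Finset N) (top mid : N)
    (fringe : Fin d → N) : Prop where
  card_eq : P.card = k' - d + 1
  top_mem : top ∈ P
  mid_mem : mid ∈ P
  mid_ne_top : mid ≠ top
  fringe_mem : ∀ i, fringe i ∈ pdomeBase P top mid
  fringe_inj : Function.Injective fringe
  adj_iff : ∀ x ∈ P, ∀ y ∈ P, (G.Adj x y ↔
    ((x = top ∧ y = mid) ∨ (y = top ∧ x = mid) ∨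
     (x ∈ pdomeBase P top mid ∧ y ∈ pdomeBase P top mid ∧ x ≠ y) ∨
     (x = mid ∧ ∃ i, y = fringe i) ∨ (y = mid ∧ ∃ i, x = fringe i)))

/-- `P` carries a pinched `(d,k')`-dome gadget with top player `top`. -/
def HasPinchedDomeGadget (G : SimpleGraph N) (d k' : ℕ) (P : Finset N) (top : N) : Prop :=
  ∃ (mid : N) (fringe : Fin d → N), IsPinchedDomeGadget G d k' P top mid fringe

/-- The gadget size `k' = k + 3·(k choose 2) + 1` of the average-based reductions. -/
def avgK' (k : ℕ) : ℕ := k + 3 * Nat.choose k 2 + 1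

variable {V : Type*} [Fintype V] [DecidableEq V]

/-- `Γ` is the coalition structure of the average-based reduction instances: its
coalitions are exactly the gadget player sets. -/
def IsAvgGamma (H : SimpleGraph V) (Pv : V → Finset N) (Pe : Sym2 V → Finset N)
    (Pve : V → Sym2 V → Finset N) (Γ : CoalitionStructure N) : Prop :=
  (∀ v : V, ∀ i ∈ Pv v, Γ.part i = Pv v) ∧
  (∀ e ∈ H.edgeSet, ∀ i ∈ Pe e, Γ.part i = Pe e) ∧
  (∀ (v : V), ∀ e ∈ H.edgeSet, v ∈ e → ∀ i ∈ Pve v e, Γ.part i = Pve v e)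

/-- The avg-AL reduction instance built from the graph `H` and `k ≥ 3` with `3 ∣ k+1`:
`G` is the constructed network of friends; `Pv v` and `Pe e` carry pinched
`(2,k')`-dome gadgets with top players `vp v` and `ep e`, and `Pve v e` a pinched
`((k+1)/3,k')`-dome gadget with top player `bp v e`. For each edge `e = xy` of `H`,
the player `bp x e` is further adjacent to `vp x`, to `ep e`, and to `bp y e`,
and there are no other edges. -/
structure AvgALReduction (H : SimpleGraph V) (k : ℕ) (G : SimpleGraph N)
    (Pv : V → Finset N) (Pe : Sym2 V → Finset N) (Pve : V → Sym2 V → Finset N)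
    (vp : V → N) (ep : Sym2 V → N) (bp : V → Sym2 V → N) : Prop where
  pdome_v : ∀ v : V, HasPinchedDomeGadget G 2 (avgK' k) (Pv v) (vp v)
  pdome_e : ∀ e ∈ H.edgeSet, HasPinchedDomeGadget G 2 (avgK' k) (Pe e) (ep e)
  pdome_ve : ∀ (v : V), ∀ e ∈ H.edgeSet, v ∈ e →
    HasPinchedDomeGadget G ((k + 1) / 3) (avgK' k) (Pve v e) (bp v e)
  disj_vv : ∀ v w : V, v ≠ w → Disjoint (Pv v) (Pv w)
  disj_ee : ∀ e ∈ H.edgeSet, ∀ f ∈ H.edgeSet, e ≠ f → Disjoint (Pe e) (Pe f)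
  disj_bb : ∀ (v : V), ∀ e ∈ H.edgeSet, v ∈ e → ∀ (w : V), ∀ f ∈ H.edgeSet, w ∈ f →
    (v, e) ≠ (w, f) → Disjoint (Pve v e) (Pve w f)
  disj_v_e : ∀ (v : V), ∀ e ∈ H.edgeSet, Disjoint (Pv v) (Pe e)
  disj_v_b : ∀ (v w : V), ∀ f ∈ H.edgeSet, w ∈ f → Disjoint (Pv v) (Pve w f)
  disj_e_b : ∀ e ∈ H.edgeSet, ∀ (w : V), ∀ f ∈ H.edgeSet, w ∈ f →
    Disjoint (Pe e) (Pve w f)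
  cover : ∀ x : N, (∃ v : V, x ∈ Pv v) ∨ (∃ e ∈ H.edgeSet, x ∈ Pe e) ∨
    (∃ (v : V), ∃ e ∈ H.edgeSet, v ∈ e ∧ x ∈ Pve v e)
  adj_bv : ∀ (v : V), ∀ e ∈ H.edgeSet, v ∈ e → G.Adj (bp v e) (vp v)
  adj_be : ∀ (v : V), ∀ e ∈ H.edgeSet, v ∈ e → G.Adj (bp v e) (ep e)
  adj_bb : ∀ x y : V, H.Adj x y → G.Adj (bp x s(x, y)) (bp y s(x, y))
  adj_cases : ∀ x y : N, G.Adj x y →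
    (∃ v : V, x ∈ Pv v ∧ y ∈ Pv v) ∨
    (∃ e ∈ H.edgeSet, x ∈ Pe e ∧ y ∈ Pe e) ∨
    (∃ (v : V), ∃ e ∈ H.edgeSet, v ∈ e ∧ x ∈ Pve v e ∧ y ∈ Pve v e) ∨
    (∃ (v : V), ∃ e ∈ H.edgeSet, v ∈ e ∧
      ((x = bp v e ∧ y = vp v) ∨ (y = bp v e ∧ x = vp v))) ∨
    (∃ (v : V), ∃ e ∈ H.edgeSet, v ∈ e ∧
      ((x = bp v e ∧ y = ep e) ∨ (y = bp v e ∧ x = ep e))) ∨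
    (∃ a b : V, H.Adj a b ∧
      ((x = bp a s(a, b) ∧ y = bp b s(a, b)) ∨ (y = bp a s(a, b) ∧ x = bp b s(a, b))))
end AHGDefs

/-!
Under `Γ` every player sits in its own gadget. Since `w ≥ n⁴`, the average valuation of a
player's friends dominates its utility: if it drops by at least one the player loses, and if
neither it nor the player's own valuation rises the player does not gain. A gadget `P` with base
`B` meets the rest of the network only in its top player, so all of this can be compared inside
`P`. If `C` contains a base player, then according to which of `B`, `mid` and `top` lie in `C`,
some base player of `C` does not gain: if `P ⊆ C` nothing changes for it; if `B ⊆ C` but `top`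
or `mid` is missing, this costs its mid or fringe friends `n` each; and if `B ⊄ C`, its friends
have fewer than `b = |B|` friends in `C`, while in `P` they are worth about `n b`. Once `C` holds
no base player, the mid player of an edge or incidence gadget has at most the top player as a
friend in `C`, and that top player has at most six neighbours, whereas in the gadget the fringe
friends of the mid player are worth about `n b` each.
-/

section Valuation

variable {N : Type*} {G : SimpleGraph N}

theorem friendsIn_subset (C : Finset N) (i : N) : friendsIn G C i ⊆ C := filter_subset _ _

theorem mem_friendsIn {C : Finset N} {i j : N} : j ∈ friendsIn G C i ↔ j ∈ C ∧ G.Adj i j :=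
  mem_filter

theorem friendsIn_subset_friendsIn {P : Finset N} (C : Finset N) {x : N}
    (hx : ∀ y, G.Adj x y → y ∈ P) : friendsIn G C x ⊆ friendsIn G P x := fun y hy =>
  mem_friendsIn.mpr ⟨hx y (mem_friendsIn.mp hy).2, (mem_friendsIn.mp hy).2⟩

theorem friendsIn_eq_of_subset {P C : Finset N} {x : N} (hx : ∀ y, G.Adj x y → y ∈ P)
    (hPC : friendsIn G P x ⊆ C) : friendsIn G C x = friendsIn G P x :=
  (friendsIn_subset_friendsIn C hx).antisymm fun _ hy =>
    mem_friendsIn.mpr ⟨hPC hy, (mem_friendsIn.mp hy).2⟩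

variable [Fintype N] [DecidableEq N]

theorem fval_le_mul_card_friendsIn (C : Finset N) (i : N) :
    fval G C i ≤ Fintype.card N * #(friendsIn G C i) := by
  unfold fval
  linarith [(#(C.filter fun j => ¬ G.Adj i j ∧ j ≠ i)).cast_nonneg (α := ℤ)]

theorem neg_card_le_fval (C : Finset N) (i : N) : -(Fintype.card N : ℤ) ≤ fval G C i := by
  unfold fval
  have : #(C.filter fun j => ¬ G.Adj i j ∧ j ≠ i) ≤ Fintype.card N := card_le_univ _
  have : (0 : ℤ) ≤ Fintype.card N * #(friendsIn G C i) := by positivity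
  omega

theorem fval_le_card_sq (C : Finset N) (i : N) : fval G C i ≤ (Fintype.card N : ℤ) ^ 2 := by
  have : #(friendsIn G C i) ≤ Fintype.card N := card_le_univ _
  calc fval G C i ≤ Fintype.card N * #(friendsIn G C i) := fval_le_mul_card_friendsIn C i
    _ ≤ Fintype.card N * Fintype.card N := by gcongr
    _ = _ := by ring

theorem fval_eq_of_mem {P : Finset N} {x : N} (hx : x ∈ P) :
    fval G P x = (Fintype.card N + 1) * #(friendsIn G P x) - (#P - 1) := by
  have hsplit := card_filter_add_card_filter_not (s := P.erase x) (G.Adj x)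
  have hfr : (P.erase x).filter (G.Adj x) = friendsIn G P x := by
    ext y
    simp only [friendsIn, mem_filter, mem_erase]
    exact ⟨fun h => ⟨h.1.2, h.2⟩, fun h => ⟨⟨(G.ne_of_adj h.2).symm, h.1⟩, h.2⟩⟩
  have hen : (P.erase x).filter (fun y => ¬ G.Adj x y) =
      P.filter fun y => ¬ G.Adj x y ∧ y ≠ x := by
    ext y
    simp only [mem_filter, mem_erase]
    tauto
  rw [hfr, hen, card_erase_of_mem hx] at hsplit
  have : 1 ≤ #P := card_pos.mpr ⟨x, hx⟩
  have hE : (#(P.filter fun y => ¬ G.Adj x y ∧ y ≠ x) : ℤ) = #P - 1 - #(friendsIn G P x) := by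
    omega
  unfold fval
  rw [hE]
  ring

/-- Relative to `P`, each friend of `x` missing from `C` costs `n` and each other missing player
gains `1`; the players of `C` outside `P` are enemies of `x`. -/
theorem fval_add_le {P C : Finset N} {x : N} (hx : ∀ y, G.Adj x y → y ∈ P) :
    fval G C x + (Fintype.card N + 1) * #(friendsIn G P x \ C) ≤ fval G P x + #(P \ C) := by
  have hfr : friendsIn G C x = friendsIn G P x ∩ C := by
    ext y
    simp only [mem_inter, mem_friendsIn]
    exact ⟨fun h => ⟨⟨hx y h.2, h.2⟩, h.1⟩, fun h => ⟨h.2, h.1.2⟩⟩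
  have hcardP := card_inter_add_card_sdiff (friendsIn G P x) C
  set EP := P.filter fun y => ¬ G.Adj x y ∧ y ≠ x
  set EC := C.filter fun y => ¬ G.Adj x y ∧ y ≠ x
  have hdisj : Disjoint EP (friendsIn G P x \ C) := disjoint_left.mpr fun y hy hy' =>
    (mem_filter.mp hy).2.1 (mem_friendsIn.mp (mem_sdiff.mp hy').1).2
  have hsub : EP ∪ (friendsIn G P x \ C) ⊆ EC ∪ (P \ C) := by
    intro y hy
    simp only [EP, EC, mem_union, mem_filter, mem_sdiff, mem_friendsIn] at hy ⊢
    tauto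
  have hcard := (card_le_card hsub).trans (card_union_le _ _)
  rw [card_union_of_disjoint hdisj] at hcard
  unfold fval
  rw [hfr]
  push_cast [← hcardP]
  nlinarith

theorem sum_fval_add_le {P C S : Finset N} (hS : ∀ x ∈ S, ∀ y, G.Adj x y → y ∈ P) :
    ∑ x ∈ S, fval G C x + (Fintype.card N + 1) * ∑ x ∈ S, (#(friendsIn G P x \ C) : ℤ) ≤
      ∑ x ∈ S, fval G P x + #S * #(P \ C) := by
  rw [mul_sum, ← sum_add_distrib, ← nsmul_eq_mul, ← sum_const, ← sum_add_distrib]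
  exact sum_le_sum fun x hx => fval_add_le (hS x hx)

end Valuation

section Utility

variable {N : Type*} [Fintype N] [DecidableEq N] {G : SimpleGraph N}

noncomputable def friendAvg (G : SimpleGraph N) (C : Finset N) (i : N) : ℚ :=
  if (friendsIn G C i).Nonempty then
    (∑ c ∈ friendsIn G C i, (fval G C c : ℚ)) / #(friendsIn G C i)
  else 0

theorem utilAvgAL_eq (w : ℚ) (C : Finset N) (i : N) :
    utilAvgAL G w C i = fval G C i + w * friendAvg G C i := rfl

theorem friendAvg_eq {C : Finset N} {i : N} (h : (friendsIn G C i).Nonempty) :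
    friendAvg G C i = (∑ c ∈ friendsIn G C i, (fval G C c : ℚ)) / #(friendsIn G C i) :=
  if_pos h

theorem friendAvg_le {C : Finset N} {i : N} {A : ℤ} (hA : 0 ≤ A)
    (h : ∀ c ∈ friendsIn G C i, fval G C c ≤ A) : friendAvg G C i ≤ A := by
  by_cases hne : (friendsIn G C i).Nonempty
  · rw [friendAvg_eq hne, div_le_iff₀ (by exact_mod_cast hne.card_pos)]
    calc ∑ c ∈ friendsIn G C i, (fval G C c : ℚ) ≤ ∑ _c ∈ friendsIn G C i, (A : ℚ) :=
          sum_le_sum fun c hc => by exact_mod_cast h c hc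
      _ = A * #(friendsIn G C i) := by rw [sum_const, nsmul_eq_mul, mul_comm]
  · rw [friendAvg, if_neg hne]
    exact_mod_cast hA

theorem le_friendAvg {P : Finset N} {i : N} {A : ℤ} (hne : (friendsIn G P i).Nonempty)
    (h : #(friendsIn G P i) * A ≤ ∑ c ∈ friendsIn G P i, fval G P c) :
    (A : ℚ) ≤ friendAvg G P i := by
  rw [friendAvg_eq hne, le_div_iff₀ (by exact_mod_cast hne.card_pos), mul_comm]
  exact_mod_cast h

theorem friendAvg_add_le {C P : Finset N} {i : N} {δ : ℤ}
    (hCP : friendsIn G C i = friendsIn G P i) (hne : (friendsIn G P i).Nonempty)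
    (h : ∑ c ∈ friendsIn G P i, fval G C c + #(friendsIn G P i) * δ ≤
      ∑ c ∈ friendsIn G P i, fval G P c) :
    friendAvg G C i + δ ≤ friendAvg G P i := by
  have hpos : (0 : ℚ) < #(friendsIn G P i) := by exact_mod_cast hne.card_pos
  rw [friendAvg_eq (hCP ▸ hne), friendAvg_eq hne, hCP, div_add' _ _ _ hpos.ne',
    div_le_div_iff_of_pos_right hpos, mul_comm]
  exact_mod_cast h

theorem utilAvgAL_le_of_le {w : ℚ} {C P : Finset N} {i : N} (hw : 0 ≤ w)
    (hval : fval G C i ≤ fval G P i) (havg : friendAvg G C i ≤ friendAvg G P i) :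
    utilAvgAL G w C i ≤ utilAvgAL G w P i := by
  rw [utilAvgAL_eq, utilAvgAL_eq]
  have : (fval G C i : ℚ) ≤ fval G P i := by exact_mod_cast hval
  nlinarith [mul_le_mul_of_nonneg_left havg hw]

/-- The player's own valuation lies in `[-n, n²]`, so a drop of the weighted average by one
outweighs it. -/
theorem utilAvgAL_le_of_friendAvg_add_one_le {w : ℚ} {C P : Finset N} {i : N}
    (hw : (Fintype.card N : ℚ) ^ 2 + Fintype.card N ≤ w)
    (h : friendAvg G C i + 1 ≤ friendAvg G P i) : utilAvgAL G w C i ≤ utilAvgAL G w P i := by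
  have hC : (fval G C i : ℚ) ≤ (Fintype.card N : ℚ) ^ 2 := by exact_mod_cast fval_le_card_sq C i
  have hP : -(Fintype.card N : ℚ) ≤ fval G P i := by exact_mod_cast neg_card_le_fval P i
  have hw0 : 0 ≤ w := le_trans (by positivity) hw
  rw [utilAvgAL_eq, utilAvgAL_eq]
  nlinarith [mul_le_mul_of_nonneg_left h hw0]

theorem utilAvgAL_le_of_friendAvg_le {w : ℚ} {C P : Finset N} {i : N} {A : ℤ}
    (hw : (Fintype.card N : ℚ) ^ 2 + Fintype.card N ≤ w) (hC : friendAvg G C i ≤ A)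
    (hP : ((A + 1 : ℤ) : ℚ) ≤ friendAvg G P i) : utilAvgAL G w C i ≤ utilAvgAL G w P i :=
  utilAvgAL_le_of_friendAvg_add_one_le hw (by push_cast at hP; linarith)

theorem utilAvgAL_le_of_subset {w : ℚ} {C P : Finset N} {x : N} (hw : 0 ≤ w) (hPC : P ⊆ C)
    (hx : ∀ y ∈ insert x (friendsIn G P x), ∀ z, G.Adj y z → z ∈ P) :
    utilAvgAL G w C x ≤ utilAvgAL G w P x := by
  have hle : ∀ y ∈ insert x (friendsIn G P x), fval G C y ≤ fval G P y := fun y hy => by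
    have := fval_add_le (C := C) (hx y hy)
    rw [sdiff_eq_empty_iff_subset.mpr hPC, card_empty] at this
    have : (0 : ℤ) ≤ (Fintype.card N + 1) * #(friendsIn G P y \ C) := by positivity
    omega
  refine utilAvgAL_le_of_le hw (hle x (mem_insert_self _ _)) ?_
  have hCP := friendsIn_eq_of_subset (hx x (mem_insert_self _ _))
    ((friendsIn_subset P x).trans hPC)
  by_cases hne : (friendsIn G P x).Nonempty
  · simpa using friendAvg_add_le (δ := 0) hCP hne (by
      simpa using sum_le_sum fun y hy => hle y (mem_insert_of_mem hy))
  · rw [friendAvg, friendAvg, hCP, if_neg hne, if_neg hne]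

theorem not_blocks_of_utilAvgAL_le {w : ℚ} {Γ : CoalitionStructure N} {C P : Finset N} {j : N}
    (hpart : ∀ c ∈ P, Γ.part c = P) (hjC : j ∈ C) (hjP : j ∈ P)
    (hle : utilAvgAL G w C j ≤ utilAvgAL G w P j) : ¬ Blocks (utilAvgAL G w) Γ C := fun hC =>
  (hC.2 j hjC).not_ge (hpart j hjP ▸ hle)

end Utility

section Gadget

variable {N : Type*} [DecidableEq N] {G : SimpleGraph N}

def IsAttachedOnlyAt (G : SimpleGraph N) (P : Finset N) (top : N) : Prop :=
  ∀ x ∈ P, x ≠ top → ∀ y, G.Adj x y → y ∈ P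

def fringeSet {d : ℕ} (fringe : Fin d → N) : Finset N := univ.image fringe

theorem mem_fringeSet {d : ℕ} {fringe : Fin d → N} {x : N} :
    x ∈ fringeSet fringe ↔ ∃ i, x = fringe i := by
  simp [fringeSet, eq_comm]

theorem mem_pdomeBase {P : Finset N} {top mid x : N} :
    x ∈ pdomeBase P top mid ↔ x ∈ P ∧ x ≠ top ∧ x ≠ mid := by
  simp [pdomeBase]

theorem eq_or_eq_of_notMem_pdomeBase {P : Finset N} {top mid x : N} (hx : x ∈ P)
    (hxB : x ∉ pdomeBase P top mid) : x = top ∨ x = mid := by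
  by_contra h
  exact hxB (mem_pdomeBase.mpr ⟨hx, (not_or.mp h).1, (not_or.mp h).2⟩)

theorem sdiff_subset_of_pdomeBase_subset {P C : Finset N} {top mid : N}
    (hBC : pdomeBase P top mid ⊆ C) : P \ C ⊆ {top, mid} := fun x hx => by
  obtain ⟨hxP, hxC⟩ := mem_sdiff.mp hx
  rcases eq_or_eq_of_notMem_pdomeBase hxP fun h => hxC (hBC h) with rfl | rfl <;> simp

theorem IsAttachedOnlyAt.adj_mem_of_mem_pdomeBase {P : Finset N} {top mid x : N}
    (hcl : IsAttachedOnlyAt G P top) (hx : x ∈ pdomeBase P top mid) :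
    ∀ y, G.Adj x y → y ∈ P :=
  hcl x (mem_pdomeBase.mp hx).1 (mem_pdomeBase.mp hx).2.1

namespace IsPinchedDomeGadget

variable {d k' : ℕ} {P : Finset N} {top mid : N} {fringe : Fin d → N}
  (g : IsPinchedDomeGadget G d k' P top mid fringe)
include g

theorem card_fringeSet : #(fringeSet fringe) = d := by
  rw [fringeSet, card_image_of_injective _ g.fringe_inj, card_univ, Fintype.card_fin]

theorem fringeSet_subset : fringeSet fringe ⊆ pdomeBase P top mid := fun x hx => by
  obtain ⟨i, rfl⟩ := mem_fringeSet.mp hx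
  exact g.fringe_mem i

theorem top_notMem_fringeSet : top ∉ fringeSet fringe := fun h =>
  (mem_pdomeBase.mp (g.fringeSet_subset h)).2.1 rfl

theorem card_pdomeBase_add_two : #(pdomeBase P top mid) + 2 = #P := by
  have hsub : {top, mid} ⊆ P := by simp [insert_subset_iff, g.top_mem, g.mid_mem]
  have := card_le_card hsub
  rw [card_pair g.mid_ne_top.symm] at this
  rw [pdomeBase, card_sdiff_of_subset hsub, card_pair g.mid_ne_top.symm]
  omega

theorem adj_top_mid : G.Adj top mid :=
  (g.adj_iff top g.top_mem mid g.mid_mem).mpr (Or.inl ⟨rfl, rfl⟩)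

theorem mem_friendsIn_iff {x y : N} (hx : x ∈ P) :
    y ∈ friendsIn G P x ↔ y ∈ P ∧
      ((x = top ∧ y = mid) ∨ (y = top ∧ x = mid) ∨
       (x ∈ pdomeBase P top mid ∧ y ∈ pdomeBase P top mid ∧ x ≠ y) ∨
       (x = mid ∧ y ∈ fringeSet fringe) ∨ (y = mid ∧ x ∈ fringeSet fringe)) := by
  rw [mem_friendsIn, mem_fringeSet, mem_fringeSet]
  exact and_congr_right fun hy => g.adj_iff x hx y hy

theorem friendsIn_top : friendsIn G P top = {mid} := by
  ext y
  have := g.mid_ne_top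
  have := g.fringeSet_subset
  rw [g.mem_friendsIn_iff g.top_mem, mem_singleton]
  simp only [mem_pdomeBase] at *
  grind [g.mid_mem]

theorem friendsIn_mid : friendsIn G P mid = insert top (fringeSet fringe) := by
  ext y
  have := g.mid_ne_top
  have := g.fringeSet_subset
  rw [g.mem_friendsIn_iff g.mid_mem, mem_insert]
  simp only [mem_pdomeBase, subset_iff] at *
  grind [g.top_mem]

theorem card_friendsIn_mid : #(friendsIn G P mid) = d + 1 := by
  rw [g.friendsIn_mid, card_insert_of_notMem g.top_notMem_fringeSet, g.card_fringeSet]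

theorem friendsIn_of_mem_fringeSet {x : N} (hx : x ∈ fringeSet fringe) :
    friendsIn G P x = insert mid ((pdomeBase P top mid).erase x) := by
  ext y
  have := g.mid_ne_top
  have := g.fringeSet_subset hx
  rw [g.mem_friendsIn_iff (mem_pdomeBase.mp this).1, mem_insert, mem_erase]
  simp only [mem_pdomeBase] at *
  grind [g.mid_mem]

theorem friendsIn_of_notMem_fringeSet {x : N} (hx : x ∈ pdomeBase P top mid)
    (hxF : x ∉ fringeSet fringe) : friendsIn G P x = (pdomeBase P top mid).erase x := by
  ext y
  rw [g.mem_friendsIn_iff (mem_pdomeBase.mp hx).1, mem_erase]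
  simp only [mem_pdomeBase] at *
  grind

theorem friendsIn_subset_of_mem_pdomeBase {x : N} (hx : x ∈ pdomeBase P top mid) :
    friendsIn G P x ⊆ insert mid ((pdomeBase P top mid).erase x) := by
  by_cases hxF : x ∈ fringeSet fringe
  · rw [g.friendsIn_of_mem_fringeSet hxF]
  · rw [g.friendsIn_of_notMem_fringeSet hx hxF]
    exact subset_insert _ _

theorem card_friendsIn_add_one {x : N} (hx : x ∈ pdomeBase P top mid) :
    #(friendsIn G P x) + 1 = #(pdomeBase P top mid) + if x ∈ fringeSet fringe then 1 else 0 := by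
  have hmid : mid ∉ (pdomeBase P top mid).erase x := fun h =>
    (mem_pdomeBase.mp (mem_of_mem_erase h)).2.2 rfl
  have := card_erase_add_one hx
  split_ifs with hxF
  · rw [g.friendsIn_of_mem_fringeSet hxF, card_insert_of_notMem hmid]
    omega
  · rw [g.friendsIn_of_notMem_fringeSet hx hxF]
    omega

end IsPinchedDomeGadget

end Gadget

section GadgetValuation

variable {N : Type*} [Fintype N] [DecidableEq N] {G : SimpleGraph N}

namespace IsPinchedDomeGadget

variable {d k' : ℕ} {P : Finset N} {top mid : N} {fringe : Fin d → N}
  (g : IsPinchedDomeGadget G d k' P top mid fringe)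
include g

theorem fval_top : fval G P top = Fintype.card N - #(pdomeBase P top mid) := by
  rw [fval_eq_of_mem g.top_mem, g.friendsIn_top, card_singleton, ← g.card_pdomeBase_add_two]
  push_cast
  ring

theorem fval_mid :
    fval G P mid = Fintype.card N * (d + 1) - (#(pdomeBase P top mid) - d) := by
  rw [fval_eq_of_mem g.mid_mem, g.card_friendsIn_mid, ← g.card_pdomeBase_add_two]
  push_cast
  ring

theorem fval_of_mem_pdomeBase {x : N} (hx : x ∈ pdomeBase P top mid) :
    fval G P x = Fintype.card N * (#(pdomeBase P top mid) - 1) - 2 +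
      if x ∈ fringeSet fringe then (Fintype.card N + 1 : ℤ) else 0 := by
  have h := g.card_friendsIn_add_one hx
  rw [fval_eq_of_mem (mem_pdomeBase.mp hx).1, ← g.card_pdomeBase_add_two]
  split_ifs at h ⊢ <;>
  · have h' : (#(friendsIn G P x) + 1 : ℤ) = _ := congrArg (Nat.cast (R := ℤ)) h
    push_cast at h' ⊢
    linear_combination (Fintype.card N + 1 : ℤ) * h'

theorem sum_fval_of_subset_pdomeBase {S : Finset N} (hS : S ⊆ pdomeBase P top mid) :
    ∑ y ∈ S, fval G P y = #S * (Fintype.card N * (#(pdomeBase P top mid) - 1) - 2) +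
      #(S ∩ fringeSet fringe) * (Fintype.card N + 1) := by
  rw [sum_congr rfl fun y hy => g.fval_of_mem_pdomeBase (hS hy), sum_add_distrib, sum_const,
    sum_ite_mem, sum_const, nsmul_eq_mul, nsmul_eq_mul]

theorem fval_le_of_mem_pdomeBase_inter {C : Finset N} {y : N} (hcl : IsAttachedOnlyAt G P top)
    (hy : y ∈ pdomeBase P top mid ∩ C) :
    fval G C y ≤ Fintype.card N * #(pdomeBase P top mid ∩ C) := by
  obtain ⟨hyB, hyC⟩ := mem_inter.mp hy
  have hsub : friendsIn G C y ⊆ insert mid ((pdomeBase P top mid ∩ C).erase y) := fun z hz => by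
    have hzP := friendsIn_subset_friendsIn C (hcl.adj_mem_of_mem_pdomeBase hyB) hz
    rcases mem_insert.mp (g.friendsIn_subset_of_mem_pdomeBase hyB hzP) with rfl | hz'
    · exact mem_insert_self _ _
    · exact mem_insert_of_mem (mem_erase.mpr ⟨(mem_erase.mp hz').1,
        mem_inter.mpr ⟨mem_of_mem_erase hz', friendsIn_subset C y hz⟩⟩)
  have hcard : #(friendsIn G C y) ≤ #(pdomeBase P top mid ∩ C) := by
    have := (card_le_card hsub).trans (card_insert_le _ _)
    have := card_erase_add_one hy
    omega
  calc fval G C y ≤ Fintype.card N * #(friendsIn G C y) := fval_le_mul_card_friendsIn C y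
    _ ≤ _ := by gcongr

theorem fval_mid_le {C : Finset N} (hcl : IsAttachedOnlyAt G P top) :
    fval G C mid ≤ Fintype.card N * (d + 1) := by
  have := card_le_card (friendsIn_subset_friendsIn C (hcl mid g.mid_mem g.mid_ne_top))
  rw [g.card_friendsIn_mid] at this
  calc fval G C mid ≤ Fintype.card N * #(friendsIn G C mid) := fval_le_mul_card_friendsIn C mid
    _ ≤ _ := by gcongr; exact_mod_cast this

end IsPinchedDomeGadget

end GadgetValuation

section GadgetCases

variable {N : Type*} [Fintype N] [DecidableEq N] {G : SimpleGraph N}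

namespace IsPinchedDomeGadget

variable {d k' : ℕ} {P : Finset N} {top mid : N} {fringe : Fin d → N}
  (g : IsPinchedDomeGadget G d k' P top mid fringe)
include g

theorem utilAvgAL_le_of_top_mem_of_mid_mem {w : ℚ} {C : Finset N} {x : N}
    (hcl : IsAttachedOnlyAt G P top) (hw : 0 ≤ w) (hBC : pdomeBase P top mid ⊆ C)
    (hmid : mid ∈ C) (htop : top ∈ C) (hx : x ∈ pdomeBase P top mid) :
    utilAvgAL G w C x ≤ utilAvgAL G w P x := by
  have hPC : P ⊆ C := fun y hy => by
    by_contra hyC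
    rcases mem_insert.mp (sdiff_subset_of_pdomeBase_subset hBC (mem_sdiff.mpr ⟨hy, hyC⟩))
      with rfl | h
    · exact hyC htop
    · exact hyC (mem_singleton.mp h ▸ hmid)
  refine utilAvgAL_le_of_subset hw hPC fun y hy => ?_
  have hyB : y = mid ∨ y ∈ pdomeBase P top mid := by
    rcases mem_insert.mp hy with rfl | hy
    · exact Or.inr hx
    · exact (mem_insert.mp (g.friendsIn_subset_of_mem_pdomeBase hx hy)).imp_right
        mem_of_mem_erase
  rcases hyB with rfl | hyB
  · exact hcl y g.mid_mem g.mid_ne_top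
  · exact hcl.adj_mem_of_mem_pdomeBase hyB

/-- Without `top` the valuation of `mid`, a friend of every fringe player, drops by `n`, and
every other friend of a fringe player gains at most `1`. -/
theorem utilAvgAL_le_of_top_notMem {w : ℚ} {C : Finset N} {c : N}
    (hcl : IsAttachedOnlyAt G P top) (hw : (Fintype.card N : ℚ) ^ 2 + Fintype.card N ≤ w)
    (hn : 2 * #(pdomeBase P top mid) + 1 ≤ Fintype.card N)
    (hBC : pdomeBase P top mid ⊆ C) (hmid : mid ∈ C) (htop : top ∉ C)
    (hc : c ∈ fringeSet fringe) : utilAvgAL G w C c ≤ utilAvgAL G w P c := by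
  have hcB := g.fringeSet_subset hc
  have hS := g.friendsIn_of_mem_fringeSet hc
  have hSC : friendsIn G P c ⊆ C := by
    rw [hS]
    exact insert_subset hmid ((erase_subset _ _).trans hBC)
  have hmidS : mid ∈ friendsIn G P c := hS ▸ mem_insert_self _ _
  have hcard : #(friendsIn G P c) = #(pdomeBase P top mid) := by
    simpa [hc] using g.card_friendsIn_add_one hcB
  have hmissing : #(P \ C) ≤ 1 := by
    refine (card_le_card fun z hz => ?_).trans (card_singleton top).le
    rcases mem_insert.mp (sdiff_subset_of_pdomeBase_subset hBC hz) with rfl | h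
    · exact mem_singleton_self _
    · exact absurd (mem_singleton.mp h ▸ hmid) (mem_sdiff.mp hz).2
  have hlost : 1 ≤ ∑ y ∈ friendsIn G P c, (#(friendsIn G P y \ C) : ℤ) := by
    have htop' : top ∈ friendsIn G P mid \ C :=
      mem_sdiff.mpr ⟨by simp [g.friendsIn_mid], htop⟩
    have := single_le_sum (f := fun y => (#(friendsIn G P y \ C) : ℤ))
      (fun _ _ => by positivity) hmidS
    have : (1 : ℤ) ≤ #(friendsIn G P mid \ C) := by exact_mod_cast card_pos.mpr ⟨top, htop'⟩
    linarith
  have hsum := sum_fval_add_le (G := G) (C := C) (S := friendsIn G P c)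
    fun y hy => hcl y ((friendsIn_subset P c) hy) (ne_of_mem_of_not_mem (hSC hy) htop)
  refine utilAvgAL_le_of_friendAvg_add_one_le hw (friendAvg_add_le (δ := 1)
    (friendsIn_eq_of_subset (hcl.adj_mem_of_mem_pdomeBase hcB) hSC) ⟨mid, hmidS⟩ ?_)
  rw [hcard] at hsum ⊢
  have : (#(P \ C) : ℤ) ≤ 1 := by exact_mod_cast hmissing
  nlinarith

/-- Without `mid` the valuation of each of the `d` fringe friends of a non-fringe base player
drops by `n`, and every other friend gains at most `2`. -/
theorem utilAvgAL_le_of_mid_notMem {w : ℚ} {C : Finset N} {j : N}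
    (hcl : IsAttachedOnlyAt G P top) (hw : (Fintype.card N : ℚ) ^ 2 + Fintype.card N ≤ w)
    (hd : 2 ≤ d) (hn : 2 * #(pdomeBase P top mid) + 1 ≤ Fintype.card N)
    (hBC : pdomeBase P top mid ⊆ C) (hmid : mid ∉ C)
    (hj : j ∈ pdomeBase P top mid) (hjF : j ∉ fringeSet fringe) :
    utilAvgAL G w C j ≤ utilAvgAL G w P j := by
  have hS := g.friendsIn_of_notMem_fringeSet hj hjF
  have hSB : friendsIn G P j ⊆ pdomeBase P top mid := hS ▸ erase_subset _ _
  have hFS : fringeSet fringe ⊆ friendsIn G P j := fun y hy => by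
    rw [hS]
    exact mem_erase.mpr ⟨ne_of_mem_of_not_mem hy hjF, g.fringeSet_subset hy⟩
  have hcard : #(friendsIn G P j) + 1 = #(pdomeBase P top mid) := by
    simpa [hjF] using g.card_friendsIn_add_one hj
  obtain ⟨y₀, hy₀⟩ := card_pos.mp (g.card_fringeSet.symm ▸ (by omega : 0 < d))
  have hmissing : #(P \ C) ≤ 2 :=
    (card_le_card (sdiff_subset_of_pdomeBase_subset hBC)).trans (card_insert_le _ _)
  have hlost : (d : ℤ) ≤ ∑ y ∈ friendsIn G P j, (#(friendsIn G P y \ C) : ℤ) :=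
    calc (d : ℤ) = ∑ _y ∈ fringeSet fringe, (1 : ℤ) := by simp [g.card_fringeSet]
      _ ≤ ∑ y ∈ fringeSet fringe, (#(friendsIn G P y \ C) : ℤ) := sum_le_sum fun y hy => by
          have : mid ∈ friendsIn G P y \ C :=
            mem_sdiff.mpr ⟨by simp [g.friendsIn_of_mem_fringeSet hy], hmid⟩
          exact_mod_cast card_pos.mpr ⟨mid, this⟩
      _ ≤ _ := sum_le_sum_of_subset_of_nonneg hFS fun _ _ _ => by positivity
  have hsum := sum_fval_add_le (G := G) (C := C) (S := friendsIn G P j)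
    fun y hy => hcl.adj_mem_of_mem_pdomeBase (hSB hy)
  refine utilAvgAL_le_of_friendAvg_add_one_le hw (friendAvg_add_le (δ := 1)
    (friendsIn_eq_of_subset (hcl.adj_mem_of_mem_pdomeBase hj) (hSB.trans hBC)) ⟨y₀, hFS hy₀⟩ ?_)
  have : (#(P \ C) : ℤ) ≤ 2 := by exact_mod_cast hmissing
  have : (#(friendsIn G P j) : ℤ) + 1 = #(pdomeBase P top mid) := by exact_mod_cast hcard
  have : (2 : ℤ) ≤ d := by exact_mod_cast hd
  have : 2 * (#(pdomeBase P top mid) : ℤ) + 1 ≤ Fintype.card N := by exact_mod_cast hn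
  nlinarith

/-- The friends in `C` of a non-fringe base player are base players of `C`, worth at most
`n (b - 1)` each, while in `P` the fringe players lift its friends' average above that. -/
theorem utilAvgAL_le_of_not_subset {w : ℚ} {C : Finset N} {j : N}
    (hcl : IsAttachedOnlyAt G P top) (hw : (Fintype.card N : ℚ) ^ 2 + Fintype.card N ≤ w)
    (hd : 2 ≤ d) (hn : 2 * #(pdomeBase P top mid) + 1 ≤ Fintype.card N)
    (hBC : ¬ pdomeBase P top mid ⊆ C)
    (hj : j ∈ pdomeBase P top mid) (hjF : j ∉ fringeSet fringe) :
    utilAvgAL G w C j ≤ utilAvgAL G w P j := by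
  set b := #(pdomeBase P top mid)
  have hS := g.friendsIn_of_notMem_fringeSet hj hjF
  have hFS : fringeSet fringe ⊆ friendsIn G P j := fun y hy => by
    rw [hS]
    exact mem_erase.mpr ⟨ne_of_mem_of_not_mem hy hjF, g.fringeSet_subset hy⟩
  have hcard : #(friendsIn G P j) + 1 = b := by
    simpa [hjF] using g.card_friendsIn_add_one hj
  have hBCb : #(pdomeBase P top mid ∩ C) + 1 ≤ b := card_lt_card
    (Finset.ssubset_iff_subset_ne.mpr ⟨inter_subset_left, fun h => hBC (h ▸ inter_subset_right)⟩)
  refine utilAvgAL_le_of_friendAvg_le (A := Fintype.card N * (b - 1)) hw ?_ ?_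
  · refine friendAvg_le (mul_nonneg (by positivity) (by omega)) fun y hy => ?_
    have hyB := friendsIn_subset_friendsIn C (hcl.adj_mem_of_mem_pdomeBase hj) hy
    rw [hS] at hyB
    have := g.fval_le_of_mem_pdomeBase_inter hcl
      (mem_inter.mpr ⟨mem_of_mem_erase hyB, friendsIn_subset C j hy⟩)
    have : (#(pdomeBase P top mid ∩ C) : ℤ) ≤ b - 1 := by omega
    nlinarith
  · obtain ⟨y₀, hy₀⟩ := card_pos.mp (g.card_fringeSet.symm ▸ (by omega : 0 < d))
    refine le_friendAvg ⟨y₀, hFS hy₀⟩ ?_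
    rw [g.sum_fval_of_subset_pdomeBase (hS ▸ erase_subset _ _), inter_eq_right.mpr hFS,
      g.card_fringeSet]
    have : (#(friendsIn G P j) : ℤ) + 1 = b := by exact_mod_cast hcard
    have : (2 : ℤ) ≤ d := by exact_mod_cast hd
    have : 2 * (b : ℤ) + 1 ≤ Fintype.card N := by exact_mod_cast hn
    nlinarith

/-- The friends in `C` of a fringe player are worth at most `n (d + 1)` each, while in `P` its
base friends are worth about `n b` each. -/
theorem utilAvgAL_le_of_inter_subset_fringeSet {w : ℚ} {C : Finset N} {c : N}
    (hcl : IsAttachedOnlyAt G P top) (hw : (Fintype.card N : ℚ) ^ 2 + Fintype.card N ≤ w)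
    (hdb : d + 3 ≤ #(pdomeBase P top mid))
    (hn : 2 * #(pdomeBase P top mid) + 1 ≤ Fintype.card N)
    (hBCF : pdomeBase P top mid ∩ C ⊆ fringeSet fringe) (hc : c ∈ pdomeBase P top mid ∩ C) :
    utilAvgAL G w C c ≤ utilAvgAL G w P c := by
  have hcF := hBCF hc
  have hcB := g.fringeSet_subset hcF
  have hS := g.friendsIn_of_mem_fringeSet hcF
  refine utilAvgAL_le_of_friendAvg_le (A := Fintype.card N * (d + 1)) hw ?_ ?_
  · refine friendAvg_le (by positivity) fun y hy => ?_
    have hyP := friendsIn_subset_friendsIn C (hcl.adj_mem_of_mem_pdomeBase hcB) hy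
    rw [hS] at hyP
    rcases mem_insert.mp hyP with rfl | hyB
    · exact g.fval_mid_le hcl
    · have := g.fval_le_of_mem_pdomeBase_inter hcl
        (mem_inter.mpr ⟨mem_of_mem_erase hyB, friendsIn_subset C c hy⟩)
      have := card_le_card hBCF
      rw [g.card_fringeSet] at this
      have : (#(pdomeBase P top mid ∩ C) : ℤ) ≤ d := by exact_mod_cast this
      nlinarith
  · refine le_friendAvg ⟨mid, hS ▸ mem_insert_self _ _⟩ ?_
    have hmid : mid ∉ (pdomeBase P top mid).erase c := fun h =>
      (mem_pdomeBase.mp (mem_of_mem_erase h)).2.2 rfl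
    have hb : 1 ≤ #(pdomeBase P top mid) := card_pos.mpr ⟨c, hcB⟩
    rw [hS, card_insert_of_notMem hmid, sum_insert hmid, g.fval_mid,
      g.sum_fval_of_subset_pdomeBase (erase_subset _ _), card_erase_of_mem hcB,
      Nat.sub_add_cancel hb]
    push_cast [Nat.cast_sub hb]
    set b := #(pdomeBase P top mid)
    have : (d : ℤ) + 3 ≤ b := by exact_mod_cast hdb
    have : 2 * (b : ℤ) + 1 ≤ Fintype.card N := by exact_mod_cast hn
    have : (0 : ℤ) ≤ #((pdomeBase P top mid).erase c ∩ fringeSet fringe) := by positivity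
    nlinarith [mul_nonneg (mul_nonneg (by omega : (0 : ℤ) ≤ b - 1)
      (by positivity : (0 : ℤ) ≤ Fintype.card N)) (by omega : (0 : ℤ) ≤ b - d - 3)]

end IsPinchedDomeGadget

end GadgetCases

section GadgetBlocking

variable {N : Type*} [Fintype N] [DecidableEq N] {G : SimpleGraph N}

namespace IsPinchedDomeGadget

variable {d k' : ℕ} {P : Finset N} {top mid : N} {fringe : Fin d → N}
  (g : IsPinchedDomeGadget G d k' P top mid fringe)
include g

theorem disjoint_pdomeBase_of_blocks {w : ℚ} {Γ : CoalitionStructure N} {C : Finset N}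
    (hC : Blocks (utilAvgAL G w) Γ C) (hpart : ∀ c ∈ P, Γ.part c = P)
    (hcl : IsAttachedOnlyAt G P top) (hw : (Fintype.card N : ℚ) ^ 2 + Fintype.card N ≤ w)
    (hd : 2 ≤ d) (hdb : d + 3 ≤ #(pdomeBase P top mid))
    (hn : 2 * #(pdomeBase P top mid) + 1 ≤ Fintype.card N) :
    Disjoint (pdomeBase P top mid) C := by
  by_contra hdisj
  obtain ⟨x, hx⟩ := not_disjoint_iff_nonempty_inter.mp hdisj
  have hBP : pdomeBase P top mid ⊆ P := fun y hy => (mem_pdomeBase.mp hy).1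
  suffices ∃ j ∈ pdomeBase P top mid, j ∈ C ∧ utilAvgAL G w C j ≤ utilAvgAL G w P j by
    obtain ⟨j, hjB, hjC, hle⟩ := this
    exact not_blocks_of_utilAvgAL_le hpart hjC (hBP hjB) hle hC
  obtain ⟨c, hc⟩ := card_pos.mp (g.card_fringeSet.symm ▸ (by omega : 0 < d))
  obtain ⟨j, hjB, hjF⟩ : ∃ j ∈ pdomeBase P top mid, j ∉ fringeSet fringe :=
    not_subset.mp fun h => by have := card_le_card h; rw [g.card_fringeSet] at this; omega
  have hcB := g.fringeSet_subset hc
  by_cases hBC : pdomeBase P top mid ⊆ C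
  · by_cases hmid : mid ∈ C
    · by_cases htop : top ∈ C
      · exact ⟨j, hjB, hBC hjB, g.utilAvgAL_le_of_top_mem_of_mid_mem hcl
          (le_trans (by positivity) hw) hBC hmid htop hjB⟩
      · exact ⟨c, hcB, hBC hcB, g.utilAvgAL_le_of_top_notMem hcl hw hn hBC hmid htop hc⟩
    · exact ⟨j, hjB, hBC hjB, g.utilAvgAL_le_of_mid_notMem hcl hw hd hn hBC hmid hjB hjF⟩
  · by_cases hex : ∃ j ∈ pdomeBase P top mid ∩ C, j ∉ fringeSet fringe
    · obtain ⟨j, hj, hjF⟩ := hex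
      obtain ⟨hjB, hjC⟩ := mem_inter.mp hj
      exact ⟨j, hjB, hjC, g.utilAvgAL_le_of_not_subset hcl hw hd hn hBC hjB hjF⟩
    · have hBCF : pdomeBase P top mid ∩ C ⊆ fringeSet fringe := fun y hy =>
        by_contra fun hyF => hex ⟨y, hy, hyF⟩
      exact ⟨x, (mem_inter.mp hx).1, (mem_inter.mp hx).2,
        g.utilAvgAL_le_of_inter_subset_fringeSet hcl hw hdb hn hBCF hx⟩

/-- Once `C` avoids the base, `mid` has no friend in `C` but `top`, whose valuation is at most
`n` times its degree, while in `P` the fringe friends of `mid` are worth about `n b` each. -/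
theorem mid_notMem_of_blocks {w : ℚ} {Γ : CoalitionStructure N} {C T : Finset N}
    (hC : Blocks (utilAvgAL G w) Γ C) (hpart : ∀ c ∈ P, Γ.part c = P)
    (hcl : IsAttachedOnlyAt G P top) (hw : (Fintype.card N : ℚ) ^ 2 + Fintype.card N ≤ w)
    (hBC : Disjoint (pdomeBase P top mid) C) (hT : ∀ y, G.Adj top y → y ∈ P ∨ y ∈ T)
    (hd : 2 ≤ d) (hTb : 2 * #T + 4 ≤ #(pdomeBase P top mid))
    (hn : 2 * #(pdomeBase P top mid) + 1 ≤ Fintype.card N) : mid ∉ C := by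
  intro hmid
  refine not_blocks_of_utilAvgAL_le hpart hmid g.mid_mem
    (utilAvgAL_le_of_friendAvg_le (A := Fintype.card N * (#T + 1)) hw ?_ ?_) hC
  · refine friendAvg_le (by positivity) fun y hy => ?_
    have hyP := friendsIn_subset_friendsIn C (hcl mid g.mid_mem g.mid_ne_top) hy
    rw [g.friendsIn_mid] at hyP
    rcases mem_insert.mp hyP with rfl | hyF
    · have hsub : friendsIn G C y ⊆ insert mid T := fun z hz => by
        rcases hT z (mem_friendsIn.mp hz).2 with hzP | hzT
        · have : z ∈ friendsIn G P y := mem_friendsIn.mpr ⟨hzP, (mem_friendsIn.mp hz).2⟩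
          rw [g.friendsIn_top, mem_singleton] at this
          exact this ▸ mem_insert_self _ _
        · exact mem_insert_of_mem hzT
      have := (card_le_card hsub).trans (card_insert_le _ _)
      calc fval G C y ≤ Fintype.card N * #(friendsIn G C y) := fval_le_mul_card_friendsIn C y
        _ ≤ _ := by gcongr; exact_mod_cast this
    · exact absurd (friendsIn_subset C mid hy) (disjoint_left.mp hBC (g.fringeSet_subset hyF))
  · refine le_friendAvg ⟨top, by simp [g.friendsIn_mid]⟩ ?_
    rw [g.card_friendsIn_mid, g.friendsIn_mid, sum_insert g.top_notMem_fringeSet, g.fval_top,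
      g.sum_fval_of_subset_pdomeBase g.fringeSet_subset, inter_self, g.card_fringeSet]
    set b := #(pdomeBase P top mid)
    have : (2 : ℤ) ≤ d := by exact_mod_cast hd
    have : 2 * (#T : ℤ) + 4 ≤ b := by exact_mod_cast hTb
    have : 2 * (b : ℤ) + 1 ≤ Fintype.card N := by exact_mod_cast hn
    push_cast
    nlinarith [mul_nonneg (mul_nonneg (by positivity : (0 : ℤ) ≤ d)
      (by positivity : (0 : ℤ) ≤ Fintype.card N)) (by omega : (0 : ℤ) ≤ b - 2 * #T - 4),
      mul_nonneg (mul_nonneg (by omega : (0 : ℤ) ≤ d - 1)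
      (by positivity : (0 : ℤ) ≤ Fintype.card N)) (by positivity : (0 : ℤ) ≤ #T + 1)]

end IsPinchedDomeGadget

end GadgetBlocking

/-- The gadgets of the reduction: `P_v`, `P_e` and `P_{v,e}`. -/
inductive GadgetIndex (V : Type*)
  | vertex (v : V)
  | edge (e : Sym2 V)
  | incidence (v : V) (e : Sym2 V)

namespace GadgetIndex

variable {V N : Type*}

def IsValid (H : SimpleGraph V) : GadgetIndex V → Prop
  | vertex _ => True
  | edge e => e ∈ H.edgeSet
  | incidence v e => e ∈ H.edgeSet ∧ v ∈ e

def IsAtEdge (e : Sym2 V) : GadgetIndex V → Prop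
  | vertex _ => False
  | edge f => f = e
  | incidence _ f => f = e

def players (Pv : V → Finset N) (Pe : Sym2 V → Finset N) (Pve : V → Sym2 V → Finset N) :
    GadgetIndex V → Finset N
  | vertex v => Pv v
  | edge e => Pe e
  | incidence v e => Pve v e

def top (vp : V → N) (ep : Sym2 V → N) (bp : V → Sym2 V → N) : GadgetIndex V → N
  | vertex v => vp v
  | edge e => ep e
  | incidence v e => bp v e

def fringeCount (k : ℕ) : GadgetIndex V → ℕ
  | vertex _ => 2
  | edge _ => 2
  | incidence _ _ => (k + 1) / 3

theorem two_le_fringeCount {k : ℕ} (hk : 5 ≤ k) (i : GadgetIndex V) :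
    2 ≤ i.fringeCount k := by
  cases i <;> simp only [fringeCount] <;> omega

theorem fringeCount_le {k : ℕ} (hk : 2 ≤ k) (i : GadgetIndex V) : i.fringeCount k ≤ k := by
  cases i <;> simp only [fringeCount] <;> omega

end GadgetIndex

open GadgetIndex

section Reduction

variable {V N : Type*} [DecidableEq N] {H : SimpleGraph V} {k : ℕ} {G : SimpleGraph N}
  {Pv : V → Finset N} {Pe : Sym2 V → Finset N} {Pve : V → Sym2 V → Finset N}
  {vp : V → N} {ep : Sym2 V → N} {bp : V → Sym2 V → N}

def edgeTops [DecidableEq V] (vp : V → N) (ep : Sym2 V → N) (bp : V → Sym2 V → N)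
    (e : Sym2 V) : Finset N :=
  e.toFinset.image vp ∪ insert (ep e) (e.toFinset.image fun u => bp u e)

theorem mem_edgeTops [DecidableEq V] {e : Sym2 V} {y : N} :
    y ∈ edgeTops vp ep bp e ↔ y = ep e ∨ (∃ u ∈ e, vp u = y) ∨ ∃ u ∈ e, bp u e = y := by
  simp [edgeTops]

theorem card_edgeTops_le [DecidableEq V] (e : Sym2 V) : #(edgeTops vp ep bp e) ≤ 5 := by
  have he : #e.toFinset ≤ 2 := by rw [Sym2.card_toFinset]; split_ifs <;> omega
  have h1 := card_union_le (e.toFinset.image vp)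
    (insert (ep e) (e.toFinset.image fun u => bp u e))
  have h2 := card_insert_le (ep e) (e.toFinset.image fun u => bp u e)
  have h3 : #(e.toFinset.image fun u => bp u e) ≤ 2 := card_image_le.trans he
  have h4 : #(e.toFinset.image vp) ≤ 2 := card_image_le.trans he
  unfold edgeTops
  omega

theorem IsAvgGamma.part_eq [Fintype N] {Γ : CoalitionStructure N}
    (hΓ : IsAvgGamma H Pv Pe Pve Γ) {i : GadgetIndex V} (hi : i.IsValid H) :
    ∀ c ∈ i.players Pv Pe Pve, Γ.part c = i.players Pv Pe Pve := by
  cases i with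
  | vertex v => exact hΓ.1 v
  | edge e => exact hΓ.2.1 e hi
  | incidence v e => exact hΓ.2.2 v e hi.1 hi.2

namespace AvgALReduction

variable (R : AvgALReduction H k G Pv Pe Pve vp ep bp)
include R

theorem hasPinchedDomeGadget {i : GadgetIndex V} (hi : i.IsValid H) :
    HasPinchedDomeGadget G (i.fringeCount k) (avgK' k) (i.players Pv Pe Pve)
      (i.top vp ep bp) := by
  cases i with
  | vertex v => exact R.pdome_v v
  | edge e => exact R.pdome_e e hi
  | incidence v e => exact R.pdome_ve v e hi.1 hi.2

theorem top_mem_players {i : GadgetIndex V} (hi : i.IsValid H) :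
    i.top vp ep bp ∈ i.players Pv Pe Pve :=
  let ⟨_, _, g⟩ := R.hasPinchedDomeGadget hi
  g.top_mem

theorem disjoint_players {i j : GadgetIndex V} (hi : i.IsValid H) (hj : j.IsValid H)
    (hij : i ≠ j) : Disjoint (i.players Pv Pe Pve) (j.players Pv Pe Pve) := by
  cases i <;> cases j <;> simp only [players]
  · exact R.disj_vv _ _ fun h => hij (h ▸ rfl)
  · exact R.disj_v_e _ _ hj
  · exact R.disj_v_b _ _ _ hj.1 hj.2
  · exact (R.disj_v_e _ _ hi).symm
  · exact R.disj_ee _ hi _ hj fun h => hij (h ▸ rfl)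
  · exact R.disj_e_b _ hi _ _ hj.1 hj.2
  · exact (R.disj_v_b _ _ _ hi.1 hi.2).symm
  · exact (R.disj_e_b _ hj _ _ hi.1 hi.2).symm
  · exact R.disj_bb _ _ hi.1 hi.2 _ _ hj.1 hj.2 fun h => hij (by cases h; rfl)

theorem eq_of_mem_players {i j : GadgetIndex V} {x : N} (hi : i.IsValid H) (hj : j.IsValid H)
    (hxi : x ∈ i.players Pv Pe Pve) (hxj : x ∈ j.players Pv Pe Pve) : i = j := by
  by_contra hij
  exact disjoint_left.mp (R.disjoint_players hi hj hij) hxi hxj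

theorem exists_mem_players (x : N) :
    ∃ i : GadgetIndex V, i.IsValid H ∧ x ∈ i.players Pv Pe Pve := by
  rcases R.cover x with ⟨v, hx⟩ | ⟨e, he, hx⟩ | ⟨v, e, he, hve, hx⟩
  · exact ⟨vertex v, trivial, hx⟩
  · exact ⟨edge e, he, hx⟩
  · exact ⟨incidence v e, ⟨he, hve⟩, hx⟩

theorem exists_mem_players_of_adj {x y : N} (hxy : G.Adj x y) :
    ∃ i : GadgetIndex V, i.IsValid H ∧ x ∈ i.players Pv Pe Pve ∧
      (y ∈ i.players Pv Pe Pve ∨ x = i.top vp ep bp) := by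
  have htop := fun i hi => R.top_mem_players (i := i) hi
  rcases R.adj_cases x y hxy with ⟨v, hx, hy⟩ | ⟨e, he, hx, hy⟩ | ⟨v, e, he, hve, hx, hy⟩ |
    ⟨v, e, he, hve, ⟨rfl, -⟩ | ⟨-, rfl⟩⟩ | ⟨v, e, he, hve, ⟨rfl, -⟩ | ⟨-, rfl⟩⟩ |
    ⟨a, b, hab, ⟨rfl, -⟩ | ⟨-, rfl⟩⟩
  · exact ⟨vertex v, trivial, hx, Or.inl hy⟩
  · exact ⟨edge e, he, hx, Or.inl hy⟩
  · exact ⟨incidence v e, ⟨he, hve⟩, hx, Or.inl hy⟩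
  · exact ⟨incidence v e, ⟨he, hve⟩, htop (incidence v e) ⟨he, hve⟩, Or.inr rfl⟩
  · exact ⟨vertex v, trivial, htop (vertex v) trivial, Or.inr rfl⟩
  · exact ⟨incidence v e, ⟨he, hve⟩, htop (incidence v e) ⟨he, hve⟩, Or.inr rfl⟩
  · exact ⟨edge e, he, htop (edge e) he, Or.inr rfl⟩
  · exact ⟨incidence a s(a, b), ⟨hab, Sym2.mem_mk_left a b⟩,
      htop _ ⟨hab, Sym2.mem_mk_left a b⟩, Or.inr rfl⟩
  · exact ⟨incidence b s(a, b), ⟨hab, Sym2.mem_mk_right a b⟩,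
      htop _ ⟨hab, Sym2.mem_mk_right a b⟩, Or.inr rfl⟩

theorem isAttachedOnlyAt {i : GadgetIndex V} (hi : i.IsValid H) :
    IsAttachedOnlyAt G (i.players Pv Pe Pve) (i.top vp ep bp) := by
  intro x hx hxt y hxy
  obtain ⟨j, hj, hxj, hy⟩ := R.exists_mem_players_of_adj hxy
  obtain rfl := R.eq_of_mem_players hi hj hx hxj
  exact hy.resolve_right hxt

theorem mem_or_mem_edgeTops_of_adj_top [DecidableEq V] {i : GadgetIndex V} {e : Sym2 V} {y : N}
    (hi : i.IsValid H) (hie : i.IsAtEdge e) (hadj : G.Adj (i.top vp ep bp) y) :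
    y ∈ i.players Pv Pe Pve ∨ y ∈ edgeTops vp ep bp e := by
  have own : ∀ j : GadgetIndex V, j.IsValid H → i.top vp ep bp ∈ j.players Pv Pe Pve → i = j :=
    fun j hj => R.eq_of_mem_players hi hj (R.top_mem_players hi)
  have key : ∀ j : GadgetIndex V, j.IsValid H → i.top vp ep bp = j.top vp ep bp → i = j :=
    fun j hj h => own j hj (h ▸ R.top_mem_players hj)
  rcases R.adj_cases _ y hadj with ⟨v, hx, -⟩ | ⟨f, hf, hx, hy⟩ | ⟨v, f, hf, hvf, hx, hy⟩ |
    ⟨v, f, hf, hvf, ⟨hx, rfl⟩ | ⟨rfl, hx⟩⟩ | ⟨v, f, hf, hvf, ⟨hx, rfl⟩ | ⟨rfl, hx⟩⟩ |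
    ⟨a, b, hab, ⟨hx, rfl⟩ | ⟨rfl, hx⟩⟩
  · obtain rfl := own (vertex v) trivial hx
    exact hie.elim
  · obtain rfl := own (edge f) hf hx
    exact Or.inl hy
  · obtain rfl := own (incidence v f) ⟨hf, hvf⟩ hx
    exact Or.inl hy
  · obtain rfl := key (incidence v f) ⟨hf, hvf⟩ hx
    obtain rfl : f = e := hie
    exact Or.inr (mem_edgeTops.mpr (by grind))
  · obtain rfl := key (vertex v) trivial hx
    exact hie.elim
  · obtain rfl := key (incidence v f) ⟨hf, hvf⟩ hx
    obtain rfl : f = e := hie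
    exact Or.inr (mem_edgeTops.mpr (by grind))
  · obtain rfl := key (edge f) hf hx
    obtain rfl : f = e := hie
    exact Or.inr (mem_edgeTops.mpr (by grind))
  · obtain rfl := key (incidence a s(a, b)) ⟨hab, Sym2.mem_mk_left a b⟩ hx
    obtain rfl : s(a, b) = e := hie
    exact Or.inr (mem_edgeTops.mpr (by grind))
  · obtain rfl := key (incidence b s(a, b)) ⟨hab, Sym2.mem_mk_right a b⟩ hx
    obtain rfl : s(a, b) = e := hie
    exact Or.inr (mem_edgeTops.mpr (by grind))

theorem two_mul_le_card [Fintype N] {u v : V} (huv : u ≠ v) :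
    2 * (avgK' k - 1) ≤ Fintype.card N := by
  obtain ⟨_, _, gu⟩ := R.pdome_v u
  obtain ⟨_, _, gv⟩ := R.pdome_v v
  have := card_le_univ (Pv u ∪ Pv v)
  rw [card_union_of_disjoint (R.disj_vv u v huv), gu.card_eq, gv.card_eq] at this
  omega

end AvgALReduction

end Reduction

theorem SimpleGraph.exists_ne_of_lt_card_add_card_edgeFinset {V : Type*} [Fintype V]
    {H : SimpleGraph V} [Fintype H.edgeSet] {k : ℕ} (hk : 1 ≤ k)
    (hsize : k < Fintype.card V + #H.edgeFinset) : ∃ u v : V, u ≠ v := by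
  refine Fintype.exists_pair_of_one_lt_card (by_contra fun h => ?_)
  have := H.card_edgeFinset_le_card_choose_two
  rw [Nat.choose_eq_zero_of_lt (by omega)] at this
  omega

theorem sq_add_le_of_pow_four_le {n w : ℚ} (hn : 2 ≤ n) (hw : n ^ 4 ≤ w) : n ^ 2 + n ≤ w := by
  have h4 : 4 ≤ n ^ 2 := by nlinarith
  nlinarith [mul_le_mul_of_nonneg_left h4 (sq_nonneg n)]

theorem four_mul_add_one_le_avgK' {k : ℕ} (hk : 4 ≤ k) : 4 * k + 1 ≤ avgK' k := by
  have : k ≤ k.choose 2 := by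
    simpa using Nat.choose_le_succ_of_lt_half_left (r := 1) (n := k) (by omega)
  unfold avgK'
  omega

theorem avgAL_blocking_members_general {V N : Type*} [Fintype V]
    [Fintype N] [DecidableEq N]
    (H : SimpleGraph V) (k : ℕ) (hk : 3 ≤ k)
    (hsize : k < Fintype.card V + H.edgeFinset.card) (hdvd : 3 ∣ (k + 1))
    (G : SimpleGraph N) (Pv : V → Finset N) (Pe : Sym2 V → Finset N)
    (Pve : V → Sym2 V → Finset N)
    (vp : V → N) (ep : Sym2 V → N) (bp : V → Sym2 V → N)
    (R : AvgALReduction H k G Pv Pe Pve vp ep bp)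
    (w : ℚ) (hw : (Fintype.card N : ℚ) ^ 4 ≤ w)
    (Γ : CoalitionStructure N) (hΓ : IsAvgGamma H Pv Pe Pve Γ)
    (C : Finset N) (hC : Blocks (utilAvgAL G w) Γ C) :
    ∀ i ∈ C, (∃ v : V, i = vp v) ∨ (∃ e ∈ H.edgeSet, i = ep e) ∨
      (∃ (v : V), ∃ e ∈ H.edgeSet, v ∈ e ∧ i = bp v e) ∨
      (∃ v : V, i ∈ Pv v ∧ G.Adj (vp v) i) := by
  intro x hxC
  have hk5 : 5 ≤ k := by omega
  have hK := four_mul_add_one_le_avgK' (by omega : 4 ≤ k)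
  obtain ⟨u, v, huv⟩ := H.exists_ne_of_lt_card_add_card_edgeFinset (by omega) hsize
  have hn := R.two_mul_le_card huv
  have hw' := sq_add_le_of_pow_four_le (by exact_mod_cast (by omega : 2 ≤ Fintype.card N)) hw
  obtain ⟨i, hi, hxi⟩ := R.exists_mem_players x
  obtain ⟨mid, fringe, g⟩ := R.hasPinchedDomeGadget hi
  have hb := g.card_eq ▸ g.card_pdomeBase_add_two
  have hd := i.two_le_fringeCount hk5
  have hdk := i.fringeCount_le (by omega : 2 ≤ k)
  have hcl := R.isAttachedOnlyAt hi
  have hpart := hΓ.part_eq hi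
  have hBC := g.disjoint_pdomeBase_of_blocks hC hpart hcl hw' hd (by omega) (by omega)
  have hmid (e : Sym2 V) (hie : i.IsAtEdge e) : mid ∉ C := by
    have := card_edgeTops_le (vp := vp) (ep := ep) (bp := bp) e
    exact g.mid_notMem_of_blocks hC hpart hcl hw' hBC
      (fun _ => R.mem_or_mem_edgeTops_of_adj_top hi hie) hd (by omega) (by omega)
  rcases eq_or_eq_of_notMem_pdomeBase hxi (disjoint_right.mp hBC hxC) with rfl | rfl
  · cases i with
    | vertex v => exact Or.inl ⟨v, rfl⟩
    | edge e => exact Or.inr (Or.inl ⟨e, hi, rfl⟩)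
    | incidence v e => exact Or.inr (Or.inr (Or.inl ⟨v, e, hi.1, hi.2, rfl⟩))
  · cases i with
    | vertex v => exact Or.inr (Or.inr (Or.inr ⟨v, g.mid_mem, g.adj_top_mid⟩))
    | edge e => exact absurd hxC (hmid e rfl)
    | incidence v e => exact absurd hxC (hmid e rfl)

/-- In the avg-AL reduction instance, every member of a coalition `C` blocking `Γ`
is a vertex player, an edge player, an incidence player, or the mid player of a
vertex gadget (i.e. a neighbor of some `vp v` inside `Pv v`); in particular `C`
contains no base-clique players and no mid players of edge or incidence gadgets. -/
theorem avgAL_blocking_members {V N : Type*} [Fintype V] [DecidableEq V]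
    [Fintype N] [DecidableEq N]
    (H : SimpleGraph V) (k : ℕ) (hk : 3 ≤ k)
    (hsize : k < Fintype.card V + H.edgeFinset.card) (hdvd : 3 ∣ (k + 1))
    (G : SimpleGraph N) (Pv : V → Finset N) (Pe : Sym2 V → Finset N)
    (Pve : V → Sym2 V → Finset N)
    (vp : V → N) (ep : Sym2 V → N) (bp : V → Sym2 V → N)
    (R : AvgALReduction H k G Pv Pe Pve vp ep bp)
    (w : ℚ) (hw : (Fintype.card N : ℚ) ^ 4 ≤ w)
    (Γ : CoalitionStructure N) (hΓ : IsAvgGamma H Pv Pe Pve Γ)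
    (C : Finset N) (hC : Blocks (utilAvgAL G w) Γ C) :
    ∀ i ∈ C, (∃ v : V, i = vp v) ∨ (∃ e ∈ H.edgeSet, i = ep e) ∨
      (∃ (v : V), ∃ e ∈ H.edgeSet, v ∈ e ∧ i = bp v e) ∨
      (∃ v : V, i ∈ Pv v ∧ G.Adj (vp v) i) :=
  avgAL_blocking_members_general H k hk hsize hdvd G Pv Pe Pve vp ep bp R w hw Γ hΓ C hC
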